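/- Let G = (V, E_G) be a simple graph and κ, τ ∈ ℕ. Construct the training data set over features {d_v : v ∈ V}: for each edge uv ∈ E_G, one red example with value 0 in d_u and in d_v and value 1 in all other features; and τ + 1 blue examples with value 1 in every feature. Fix an ordering v_1, …, v_n of V and let T be the decision tree whose cuts c_1, …, c_n form a path, where c_i has feature d_{v_i} and threshold −1, the left child of every c_i is a leaf labeled red, the right child of c_i is c_{i+1} for i < n, and the right child of c_n is a leaf labeled blue. Then there exists S ⊆ V with |S| ≤ κ such that at most τ edges of G have no endpoint in S if and only if the Threshold Adjustment instance ((E, λ), T, κ, τ) is a yes-instance. -/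

import Mathlib

/-- The two class labels. -/
def blue : Bool := true

def red : Bool := false

/-- Decision trees with features of type `α`: each leaf carries a class label,
each internal node (a *cut*) carries a feature and a real threshold. -/
inductive DTree (α : Type) : Type
  | leaf (label : Bool) : DTree α
  | node (feat : α) (thr : ℝ) (left right : DTree α) : DTree α

namespace DTree

/-- The class that the tree assigns to the example `e`. -/
noncomputable def classify {α : Type} : DTree α → (α → ℝ) → Bool
  | leaf c, _ => c
  | node f x l r, e => if e f ≤ x then l.classify e else r.classify e

end DTree

/-- The number of errors of `T` on the training data set `(E, lab)`. -/
noncomputable def errorCount {α ι : Type} [Fintype ι] (E : ι → α → ℝ)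
    (lab : ι → Bool) (T : DTree α) : ℕ :=
  (Finset.univ.filter (fun i => T.classify (E i) ≠ lab i)).card

/-- `T'` has the same shape as `T` and the same feature at every cut; thresholds and
leaf labels may differ. -/
def SameShapeFeat {α : Type} : DTree α → DTree α → Prop
  | DTree.leaf _, DTree.leaf _ => True
  | DTree.node f _ l r, DTree.node f' _ l' r' =>
      f = f' ∧ SameShapeFeat l l' ∧ SameShapeFeat r r'
  | _, _ => False

/-- The number of cuts at which the thresholds of the two (same-shaped) trees
differ. -/
noncomputable def adjCost {α : Type} : DTree α → DTree α → ℕ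
  | DTree.node _ x l r, DTree.node _ x' l' r' =>
      (if x = x' then 0 else 1) + adjCost l l' + adjCost r r'
  | _, _ => 0

/-- The Threshold Adjustment instance `((E, lab), T, k, t)` is a yes-instance. -/
def TAYes {α ι : Type} [Fintype ι] (E : ι → α → ℝ) (lab : ι → Bool)
    (T : DTree α) (k t : ℕ) : Prop :=
  ∃ T' : DTree α, SameShapeFeat T T' ∧ adjCost T T' ≤ k ∧ errorCount E lab T' ≤ t

/-- The path-shaped decision tree whose cuts use the listed features (in order), all
with threshold `thr`; the left child of every cut is a red leaf, the right child of
the last cut is a blue leaf. -/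
def chainTree {α : Type} (thr : ℝ) : List α → DTree α
  | [] => DTree.leaf blue
  | f :: fs => DTree.node f thr (DTree.leaf red) (chainTree thr fs)

/-! A partial vertex cover `S` yields a good tree by moving the thresholds of the cuts at `S`
to `0`: an edge example with an endpoint in `S` then leaves the path into a red leaf, while the
all-ones blue examples still reach the blue leaf, so only uncovered edges are errors.
Conversely, the `τ + 1` blue examples are identical, so a tree with at most `τ` errors classifies
the all-ones example blue. Take `S` to be the features whose threshold became nonnegative:
an edge avoiding `S` makes exactly the same comparisons as the all-ones example, so it is
classified blue and counts as an error. -/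

namespace DTree

variable {α : Type}

def chain (thr : α → ℝ) (lab : α → Bool) (last : Bool) : List α → DTree α
  | [] => leaf last
  | f :: fs => node f (thr f) (leaf (lab f)) (chain thr lab last fs)

theorem sameShapeFeat_chainTree_chain (c : ℝ) (thr : α → ℝ) (lab : α → Bool)
    (last : Bool) : ∀ L : List α, SameShapeFeat (chainTree c L) (chain thr lab last L)
  | [] => trivial
  | _ :: fs => ⟨rfl, trivial, sameShapeFeat_chainTree_chain c thr lab last fs⟩

theorem adjCost_chainTree_chain (c : ℝ) (thr : α → ℝ) (lab : α → Bool) (last : Bool) :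
    ∀ L : List α,
      adjCost (chainTree c L) (chain thr lab last L) = (L.filter (thr · ≠ c)).length
  | [] => rfl
  | f :: fs => by
    rw [chainTree, chain, adjCost, adjCost_chainTree_chain c thr lab last fs, List.filter_cons]
    change (if c = thr f then 0 else 1) + 0 + _ = _
    by_cases h : thr f = c
    · simp [h]
    · simp [h, Ne.symm h, Nat.add_comm]

theorem chain_congr {thr thr' : α → ℝ} {lab lab' : α → Bool} (last : Bool) :
    ∀ {L : List α}, (∀ v ∈ L, thr v = thr' v) → (∀ v ∈ L, lab v = lab' v) →
      chain thr lab last L = chain thr' lab' last L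
  | [], _, _ => rfl
  | f :: fs, hthr, hlab => by
    rw [chain, chain, hthr f List.mem_cons_self, hlab f List.mem_cons_self,
      chain_congr last (L := fs) (fun v hv => hthr v (List.mem_cons_of_mem f hv))
        (fun v hv => hlab v (List.mem_cons_of_mem f hv))]

theorem exists_chain_of_sameShapeFeat (c : ℝ) :
    ∀ {L : List α}, L.Nodup → ∀ {T : DTree α}, SameShapeFeat (chainTree c L) T →
      ∃ (thr : α → ℝ) (lab : α → Bool) (last : Bool), T = chain thr lab last L
  | [], _, leaf b, _ => ⟨fun _ => c, fun _ => b, b, rfl⟩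
  | f :: fs, hL, node _ x (leaf b) r, ⟨rfl, _, hr⟩ => by
    classical
    obtain ⟨thr, lab, last, rfl⟩ := exists_chain_of_sameShapeFeat c hL.of_cons hr
    have hf : ∀ v ∈ fs, v ≠ f := fun v hv hvf => (List.nodup_cons.1 hL).1 (hvf ▸ hv)
    refine ⟨Function.update thr f x, Function.update lab f b, last, ?_⟩
    simp only [chain, Function.update_self,
      chain_congr last (fun v hv => Function.update_of_ne (hf v hv) x thr)
        (fun v hv => Function.update_of_ne (hf v hv) b lab)]

section Classify

variable (thr : α → ℝ) (lab : α → Bool) (last : Bool)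

theorem classify_chain_congr :
    ∀ {L : List α} {e e' : α → ℝ}, (∀ f ∈ L, (e f ≤ thr f ↔ e' f ≤ thr f)) →
      (chain thr lab last L).classify e = (chain thr lab last L).classify e'
  | [], _, _, _ => rfl
  | f :: fs, e, e', h => by
    have ih := classify_chain_congr (L := fs) (e := e) (e' := e')
      (fun g hg => h g (List.mem_cons_of_mem f hg))
    simp only [chain, classify, h f List.mem_cons_self, ih]

theorem classify_chain_of_forall_lt :
    ∀ {L : List α} {e : α → ℝ}, (∀ f ∈ L, thr f < e f) →
      (chain thr lab last L).classify e = last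
  | [], _, _ => rfl
  | f :: fs, e, h => by
    simp only [chain, classify, not_le.2 (h f List.mem_cons_self), if_false,
      classify_chain_of_forall_lt (L := fs) (fun g hg => h g (List.mem_cons_of_mem f hg))]

theorem classify_chain_const_of_exists_le (c : Bool) :
    ∀ {L : List α} {e : α → ℝ}, (∃ f ∈ L, e f ≤ thr f) →
      (chain thr (fun _ => c) last L).classify e = c
  | f :: fs, e, ⟨g, hg, hle⟩ => by
    by_cases hf : e f ≤ thr f
    · simp only [chain, classify, hf, if_true]
    · have hgfs : g ∈ fs := (List.mem_cons.1 hg).resolve_left (by rintro rfl; exact hf hle)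
      simp only [chain, classify, hf, if_false,
        classify_chain_const_of_exists_le c ⟨g, hgfs, hle⟩]

end Classify

end DTree

section ErrorCount

variable {α : Type} (T : DTree α)

theorem errorCount_sumElim {ι κ : Type} [Fintype ι] [Fintype κ] (E₁ : ι → α → ℝ)
    (E₂ : κ → α → ℝ) (lab₁ : ι → Bool) (lab₂ : κ → Bool) :
    errorCount (Sum.elim E₁ E₂) (Sum.elim lab₁ lab₂) T =
      errorCount E₁ lab₁ T + errorCount E₂ lab₂ T := by
  simp only [errorCount, Finset.card_filter, Fintype.sum_sum_type]
  rfl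

theorem errorCount_const {ι : Type} [Fintype ι] (e : α → ℝ) (c : Bool) :
    errorCount (fun _ : ι => e) (fun _ => c) T =
      if T.classify e = c then 0 else Fintype.card ι := by
  split_ifs with h <;> simp [errorCount, h]

theorem errorCount_subtype {β : Type} (s : Finset β) (E : β → α → ℝ) (lab : β → Bool) :
    errorCount (fun b : s => E b) (fun b => lab b) T =
      (s.filter fun b => T.classify (E b) ≠ lab b).card := by
  simp only [errorCount, Finset.card_filter]
  exact Finset.sum_coe_sort s fun b => if T.classify (E b) ≠ lab b then 1 else 0

end ErrorCount

theorem List.Nodup.length_filter_eq_card_filter_univ {α : Type} [Fintype α] [DecidableEq α]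
    {L : List α} (hnd : L.Nodup) (hall : ∀ v, v ∈ L) (p : α → Bool) :
    (L.filter p).length = (Finset.univ.filter fun v => p v).card := by
  rw [← List.toFinset_card_of_nodup (hnd.filter p), List.toFinset_filter]
  congr
  ext v
  simp [hall v]

section VertexCover

variable {V : Type} [DecidableEq V]

def coverTree (S : Finset V) (L : List V) : DTree V :=
  DTree.chain (fun v => if v ∈ S then 0 else -1) (fun _ => red) blue L

theorem adjCost_chainTree_coverTree [Fintype V] (S : Finset V) {L : List V} (hnd : L.Nodup)
    (hall : ∀ v, v ∈ L) : adjCost (chainTree (-1) L) (coverTree S L) = S.card := by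
  rw [coverTree, DTree.adjCost_chainTree_chain, hnd.length_filter_eq_card_filter_univ hall]
  congr
  ext v
  by_cases hv : v ∈ S <;> simp [hv]

theorem classify_coverTree_one (S : Finset V) (L : List V) :
    (coverTree S L).classify (fun _ => 1) = blue :=
  DTree.classify_chain_of_forall_lt _ _ _ fun v _ => by split_ifs <;> norm_num

theorem classify_coverTree_edge {S : Finset V} {L : List V} (hall : ∀ v, v ∈ L) {e : Sym2 V}
    {v : V} (hvS : v ∈ S) (hve : v ∈ e) :
    (coverTree S L).classify (fun w => if w ∈ e then 0 else 1) = red :=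
  DTree.classify_chain_const_of_exists_le _ _ _ ⟨v, hall v, by simp [hvS, hve]⟩

theorem classify_chain_edge_eq_one (thr : V → ℝ) (lab : V → Bool) (last : Bool) (L : List V)
    {e : Sym2 V} (he : ∀ v ∈ e, thr v < 0) :
    (DTree.chain thr lab last L).classify (fun w => if w ∈ e then 0 else 1) =
      (DTree.chain thr lab last L).classify (fun _ => 1) := by
  refine DTree.classify_chain_congr _ _ _ fun v _ => ?_
  by_cases hve : v ∈ e
  · have := he v hve
    simp only [hve, if_true]
    constructor <;> intro h <;> linarith
  · simp [hve]

end VertexCover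

open Classical in
/-- Partial-vertex-cover reduction. For a simple graph `G` on `V`:
one red example per edge (value `0` at the two endpoint features, value `1`
elsewhere), and `τ + 1` blue examples with all values `1`; the tree is the path of
cuts with features `d_{v_1}, …, d_{v_n}` (an enumeration `L` of `V`) and threshold
`−1`. Then there is `S ⊆ V` with `|S| ≤ κ` leaving at most `τ` edges uncovered if and
only if `((E, λ), T, κ, τ)` is a yes-instance of Threshold Adjustment. -/
theorem stmt12 {V : Type} [Fintype V] [DecidableEq V] (G : SimpleGraph V)
    [DecidableRel G.Adj] (κ τ : ℕ)
    (L : List V) (hnd : L.Nodup) (hall : ∀ v : V, v ∈ L) :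
    (∃ S : Finset V, S.card ≤ κ ∧
        (G.edgeFinset.filter (fun e => ∀ v ∈ S, v ∉ e)).card ≤ τ) ↔
    TAYes (ι := {e : Sym2 V // e ∈ G.edgeFinset} ⊕ Fin (τ + 1))
      (Sum.elim (fun es (v : V) => if v ∈ es.1 then (0 : ℝ) else 1)
        (fun _ (_ : V) => 1))
      (Sum.elim (fun _ => red) (fun _ => blue))
      (chainTree (-1) L) κ τ := by
  simp only [TAYes, errorCount_sumElim, errorCount_const, Fintype.card_fin,
    errorCount_subtype _ G.edgeFinset (fun e v => if v ∈ e then (0 : ℝ) else 1) fun _ => red]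
  constructor
  · rintro ⟨S, hcard, huncovered⟩
    refine ⟨coverTree S L, DTree.sameShapeFeat_chainTree_chain _ _ _ _ L,
      (adjCost_chainTree_coverTree S hnd hall).trans_le hcard, ?_⟩
    rw [if_pos (classify_coverTree_one S L), add_zero]
    refine le_trans (Finset.card_le_card (Finset.monotone_filter_right _ ?_)) huncovered
    intro e _ herr v hvS hve
    exact herr (classify_coverTree_edge hall hvS hve)
  · rintro ⟨T, hshape, hcost, herr⟩
    obtain ⟨thr, lab, last, rfl⟩ := DTree.exists_chain_of_sameShapeFeat (-1) hnd hshape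
    have hblue : (DTree.chain thr lab last L).classify (fun _ => 1) = blue := by
      by_contra h
      rw [if_neg h] at herr
      omega
    rw [if_pos hblue, add_zero] at herr
    refine ⟨Finset.univ.filter (0 ≤ thr ·), ?_, ?_⟩
    · rw [DTree.adjCost_chainTree_chain, hnd.length_filter_eq_card_filter_univ hall] at hcost
      refine le_trans (Finset.card_le_card (Finset.monotone_filter_right _ ?_)) hcost
      intro v _ hv
      simp only [decide_eq_true_eq]
      linarith
    · refine le_trans (Finset.card_le_card (Finset.monotone_filter_right _ ?_)) herr
      intro e _ huncovered
      rw [classify_chain_edge_eq_one thr lab last L fun v hve => ?_, hblue]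
      · decide
      · exact not_le.1 fun h => huncovered v (Finset.mem_filter.2 ⟨Finset.mem_univ v, h⟩) hve
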